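/- Let G be a biclique graph with G ≠ K3 and G ≠ diamond. Then every vertex v of degree 2 in G has its two neighbors adjacent to each other (so v together with its neighbors induces a K3). -/

import Mathlib

open SimpleGraph

variable {V : Type*}

/-- `S` is the vertex set of an induced complete bipartite subgraph of `G`. -/
def IsCompleteBipartiteSet (G : SimpleGraph V) (S : Set V) : Prop :=
  ∃ X Y : Set V, X.Nonempty ∧ Y.Nonempty ∧ S = X ∪ Y ∧ Disjoint X Y ∧
    ∀ a ∈ S, ∀ b ∈ S, (G.Adj a b ↔ ((a ∈ X ∧ b ∈ Y) ∨ (a ∈ Y ∧ b ∈ X)))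

/-- A biclique of `G`: a maximal induced complete bipartite subgraph,
identified with its vertex set. -/
def IsBiclique (G : SimpleGraph V) (S : Set V) : Prop :=
  IsCompleteBipartiteSet G S ∧
    ∀ T : Set V, IsCompleteBipartiteSet G T → S ⊆ T → T = S

/-- The biclique graph `KB(G)`: the intersection graph of the bicliques of `G`. -/
def KB (G : SimpleGraph V) : SimpleGraph {S : Set V // IsBiclique G S} where
  Adj A B := A ≠ B ∧ (A.1 ∩ B.1).Nonempty
  symm := by
    constructor
    intro A B h
    exact ⟨Ne.symm h.1, by rw [Set.inter_comm]; exact h.2⟩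
  loopless := by
    constructor
    intro A h
    exact h.1 rfl

/-- The distance between two bicliques (vertex sets) of `G`:
`min { d_G(b,b') : b ∈ B, b' ∈ B' }`. -/
noncomputable def bicliqueDist (G : SimpleGraph V) (B B' : Set V) : ℕ :=
  sInf {k : ℕ | ∃ b ∈ B, ∃ b' ∈ B', G.dist b b' = k}

/-- The diamond: `K4` minus an edge (the edge between vertices 2 and 3 is missing). -/
def diamondGraph : SimpleGraph (Fin 4) :=
  SimpleGraph.fromEdgeSet {s(0, 1), s(0, 2), s(0, 3), s(1, 2), s(1, 3)}

/-- The Hajós graph: a triangle `0,1,2` plus vertices `3,4,5`, where `3` is adjacent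
to exactly `0,1`, `4` to exactly `1,2`, and `5` to exactly `2,0`. -/
def hajosGraph : SimpleGraph (Fin 6) :=
  SimpleGraph.fromEdgeSet
    {s(0, 1), s(1, 2), s(0, 2), s(3, 0), s(3, 1), s(4, 1), s(4, 2), s(5, 2), s(5, 0)}

/-- A pair of adjacent vertices forms a complete bipartite set. -/
lemma pair_cb {G : SimpleGraph V} {x y : V} (h : G.Adj x y) :
    IsCompleteBipartiteSet G {x, y} := by
  refine ⟨{x}, {y}, Set.singleton_nonempty x, Set.singleton_nonempty y, by rw [Set.insert_eq],
    Set.disjoint_singleton.mpr h.ne, ?_⟩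
  intro u hu w hw
  simp only [Set.mem_insert_iff, Set.mem_singleton_iff] at hu hw
  rcases hu with rfl | rfl <;> rcases hw with rfl | rfl <;>
    simp [h, h.symm, h.ne, h.ne.symm, SimpleGraph.irrefl]

/-- A star with two non-adjacent leaves is a complete bipartite set. -/
lemma star_cb {G : SimpleGraph V} {x y z : V} (h : G.Adj x y) (h' : G.Adj x z)
    (hyz : ¬G.Adj y z) : IsCompleteBipartiteSet G {x, y, z} := by
  refine ⟨{x}, {y, z}, Set.singleton_nonempty x, ⟨y, by simp⟩, by rw [Set.insert_eq], ?_, ?_⟩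
  · rw [Set.disjoint_singleton_left]; simp [h.ne, h'.ne]
  · have hzy : ¬G.Adj z y := fun h'' => hyz h''.symm
    intro u hu w hw
    simp only [Set.mem_insert_iff, Set.mem_singleton_iff] at hu hw
    rcases hu with rfl | rfl | rfl <;> rcases hw with rfl | rfl | rfl <;>
      simp [h, h', h.symm, h'.symm, hyz, hzy, h.ne, h'.ne, h.ne.symm,
        h'.ne.symm]

/-- Two non-adjacent vertices of a complete bipartite set have a common neighbor in it. -/
lemma common_nbr {G : SimpleGraph V} {C : Set V} (hC : IsCompleteBipartiteSet G C) {u w : V}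
    (hu : u ∈ C) (hw : w ∈ C) (huw : ¬G.Adj u w) : ∃ y ∈ C, G.Adj y u ∧ G.Adj y w := by
  obtain ⟨X, Y, hX, hY, hCeq, hXY, hadj⟩ := hC
  have mem : ∀ z, z ∈ C ↔ z ∈ X ∪ Y := fun z => by rw [hCeq]
  rcases (mem u).1 hu with huX | huY <;> rcases (mem w).1 hw with hwX | hwY
  · obtain ⟨y, hy⟩ := hY
    have hyC := (mem y).2 (Or.inr hy)
    exact ⟨y, hyC, (hadj y hyC u hu).2 (Or.inr ⟨hy, huX⟩), (hadj y hyC w hw).2 (Or.inr ⟨hy, hwX⟩)⟩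
  · exact absurd ((hadj u hu w hw).2 (Or.inl ⟨huX, hwY⟩)) huw
  · exact absurd ((hadj u hu w hw).2 (Or.inr ⟨huY, hwX⟩)) huw
  · obtain ⟨y, hy⟩ := hX
    have hyC := (mem y).2 (Or.inl hy)
    exact ⟨y, hyC, (hadj y hyC u hu).2 (Or.inl ⟨hy, huY⟩), (hadj y hyC w hw).2 (Or.inl ⟨hy, hwY⟩)⟩

/-- A complete bipartite set meeting `C` but not inside `C` has an edge leaving `C`. -/
lemma exists_adj_in_out {G : SimpleGraph V} {A C : Set V} (hA : IsCompleteBipartiteSet G A)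
    (h1 : (A ∩ C).Nonempty) (h2 : ¬ A ⊆ C) :
    ∃ c ∈ A ∩ C, ∃ a' ∈ A, a' ∉ C ∧ G.Adj c a' := by
  obtain ⟨P, Q, hP, hQ, hAeq, hPQ, hadj⟩ := hA
  obtain ⟨c, hcA, hcC⟩ := h1
  obtain ⟨a', ha'A, ha'C⟩ := Set.not_subset.mp h2
  have mem : ∀ z, z ∈ A ↔ z ∈ P ∪ Q := fun z => by rw [hAeq]
  by_contra hno
  have key : ∀ x ∈ A, x ∈ C → ∀ z ∈ A, G.Adj x z → z ∈ C := fun x hx hxC z hz hxz =>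
    by_contra fun hzC => hno ⟨x, ⟨hx, hxC⟩, z, hz, hzC, hxz⟩
  rcases (mem c).1 hcA with hcP | hcQ
  · obtain ⟨q, hq⟩ := hQ
    have hqA := (mem q).2 (Or.inr hq)
    have hqC := key c hcA hcC q hqA ((hadj c hcA q hqA).2 (Or.inl ⟨hcP, hq⟩))
    rcases (mem a').1 ha'A with ha'P | ha'Q
    · exact ha'C (key q hqA hqC a' ha'A ((hadj q hqA a' ha'A).2 (Or.inr ⟨hq, ha'P⟩)))
    · exact ha'C (key c hcA hcC a' ha'A ((hadj c hcA a' ha'A).2 (Or.inl ⟨hcP, ha'Q⟩)))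
  · obtain ⟨p, hp⟩ := hP
    have hpA := (mem p).2 (Or.inl hp)
    have hpC := key c hcA hcC p hpA ((hadj c hcA p hpA).2 (Or.inr ⟨hcQ, hp⟩))
    rcases (mem a').1 ha'A with ha'P | ha'Q
    · exact ha'C (key c hcA hcC a' ha'A ((hadj c hcA a' ha'A).2 (Or.inr ⟨hcQ, ha'P⟩)))
    · exact ha'C (key p hpA hpC a' ha'A ((hadj p hpA a' ha'A).2 (Or.inl ⟨hp, ha'Q⟩)))

/-- Every complete bipartite set of a finite graph extends to a biclique. -/
lemma exists_biclique_superset {W : Type*} [Finite W] (H : SimpleGraph W) {S : Set W}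
    (hS : IsCompleteBipartiteSet H S) : ∃ B : Set W, IsBiclique H B ∧ S ⊆ B := by
  obtain ⟨M, hM, hmax⟩ := Set.Finite.exists_maximalFor id
    {T : Set W | IsCompleteBipartiteSet H T ∧ S ⊆ T} (Set.toFinite _) ⟨S, hS, subset_rfl⟩
  exact ⟨M, ⟨hM.1, fun T hT hMT => Set.Subset.antisymm (hmax ⟨hT, hM.2.trans hMT⟩ hMT) hMT⟩, hM.2⟩

/-- Key lemma: if bicliques `A` and `C` intersect, `b ∈ B ∩ C` with `A ∩ B = ∅`,
then there is a biclique meeting `C` distinct from `A`, `B`, `C`. -/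
lemma third_biclique {W : Type*} [Finite W] {H : SimpleGraph W} {A B C : Set W}
    (hA : IsBiclique H A) (hB : IsBiclique H B) (hC : IsBiclique H C) {b0 c0 : W}
    (hbB0 : b0 ∈ B) (hbC0 : b0 ∈ C) (hcA0 : c0 ∈ A) (hcC0 : c0 ∈ C) (hAB : A ∩ B = ∅) :
    ∃ D : Set W, IsBiclique H D ∧ (C ∩ D).Nonempty ∧ D ≠ A ∧ D ≠ B ∧ D ≠ C := by
  have notboth : ∀ x, x ∈ A → x ∈ B → False := fun x h1 h2 => by
    have : x ∈ A ∩ B := ⟨h1, h2⟩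
    rw [hAB] at this; exact this
  have hAC : ¬ A ⊆ C := fun h => by
    have hCA : C = A := hA.2 C hC.1 h
    rw [hCA] at hbC0; exact notboth b0 hbC0 hbB0
  have hBC : ¬ B ⊆ C := fun h => by
    have hCB : C = B := hB.2 C hC.1 h
    rw [hCB] at hcC0; exact notboth c0 hcA0 hcC0
  obtain ⟨c, ⟨hcA, hcC⟩, a', ha'A, ha'C, hca'⟩ := exists_adj_in_out hA.1 ⟨c0, hcA0, hcC0⟩ hAC
  obtain ⟨b, ⟨hbB, hbC⟩, b', hb'B, hb'C, hbb'⟩ := exists_adj_in_out hB.1 ⟨b0, hbB0, hbC0⟩ hBC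
  have fin : ∀ T : Set W, IsCompleteBipartiteSet H T → (C ∩ T).Nonempty → ¬ T ⊆ A →
      ¬ T ⊆ B → ¬ T ⊆ C →
      ∃ D : Set W, IsBiclique H D ∧ (C ∩ D).Nonempty ∧ D ≠ A ∧ D ≠ B ∧ D ≠ C := by
    intro T hT hCT hTA hTB hTC
    obtain ⟨D, hD, hTD⟩ := exists_biclique_superset H hT
    refine ⟨D, hD, hCT.mono (Set.inter_subset_inter_right _ hTD), ?_, ?_, ?_⟩
    · rintro rfl; exact hTA hTD
    · rintro rfl; exact hTB hTD
    · rintro rfl; exact hTC hTD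
  by_cases h1 : H.Adj a' b
  · exact fin {a', b} (pair_cb h1) ⟨b, hbC, by simp⟩ (fun h => notboth b (h (by simp)) hbB)
      (fun h => notboth a' ha'A (h (by simp))) (fun h => ha'C (h (by simp)))
  by_cases h2 : H.Adj c b'
  · exact fin {c, b'} (pair_cb h2) ⟨c, hcC, by simp⟩ (fun h => notboth b' (h (by simp)) hb'B)
      (fun h => notboth c hcA (h (by simp))) (fun h => hb'C (h (by simp)))
  by_cases h3 : H.Adj c b
  · exact fin {c, a', b} (star_cb hca' h3 h1) ⟨c, hcC, by simp⟩
      (fun h => notboth b (h (by simp)) hbB)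
      (fun h => notboth c hcA (h (by simp))) (fun h => ha'C (h (by simp)))
  obtain ⟨y, hyC, hyc, hyb⟩ := common_nbr hC.1 hcC hbC h3
  by_cases h4 : H.Adj y a'
  · exact fin {y, a', b} (star_cb h4 hyb h1) ⟨b, hbC, by simp⟩
      (fun h => notboth b (h (by simp)) hbB)
      (fun h => notboth a' ha'A (h (by simp))) (fun h => ha'C (h (by simp)))
  by_cases h5 : H.Adj y b'
  · exact fin {y, b', c} (star_cb h5 hyc (fun h => h2 h.symm)) ⟨c, hcC, by simp⟩
      (fun h => notboth b' (h (by simp)) hb'B)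
      (fun h => notboth c hcA (h (by simp))) (fun h => hb'C (h (by simp)))
  by_cases hyA : y ∈ A
  · exact fin {b, y, b'} (star_cb hyb.symm hbb' h5) ⟨b, hbC, by simp⟩
      (fun h => notboth b (h (by simp)) hbB)
      (fun h => notboth y hyA (h (by simp))) (fun h => hb'C (h (by simp)))
  · exact fin {c, y, a'} (star_cb hyc.symm hca' h4) ⟨c, hcC, by simp⟩
      (fun h => hyA (h (by simp)))
      (fun h => notboth c hcA (h (by simp))) (fun h => ha'C (h (by simp)))

/-- In a biclique graph `G = KB(H)` that is neither `K₃` nor the diamond, the two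
neighbors of any degree-`2` vertex are adjacent (so the vertex and its neighbors
induce a `K₃`). -/
theorem degree_two_neighbors_adjacent
    {V W : Type*} [Fintype V] [Fintype W] (H : SimpleGraph W) (G : SimpleGraph V)
    [DecidableRel G.Adj] (iso : G ≃g KB H)
    (hK3 : IsEmpty (G ≃g (⊤ : SimpleGraph (Fin 3))))
    (hdia : IsEmpty (G ≃g diamondGraph)) :
    ∀ v a b : V, G.degree v = 2 → G.Adj v a → G.Adj v b → a ≠ b → G.Adj a b := by
  classical
  intro v a b hdeg hva hvb hab
  by_contra hnadj
  have hKBab : ¬ (KB H).Adj (iso a) (iso b) := fun h => hnadj (iso.map_adj_iff.mp h)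
  have hABne : iso a ≠ iso b := fun h => hab (iso.toEquiv.injective (by exact h))
  have hABempty : ((iso a).1 ∩ (iso b).1) = ∅ := by
    by_contra h
    exact hKBab ⟨hABne, Set.nonempty_iff_ne_empty.mpr h⟩
  have hCA : (KB H).Adj (iso v) (iso a) := iso.map_adj_iff.mpr hva
  have hCB : (KB H).Adj (iso v) (iso b) := iso.map_adj_iff.mpr hvb
  obtain ⟨y, hyC, hyB⟩ := hCB.2
  obtain ⟨x, hxC, hxA⟩ := hCA.2
  obtain ⟨D, hD, hCD, hDA, hDB, hDC⟩ := third_biclique (A := (iso a).1) (B := (iso b).1)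
    (C := (iso v).1) (iso a).2 (iso b).2 (iso v).2 hyB hyC hxA hxC hABempty
  set Dv : {S : Set W // IsBiclique H S} := ⟨D, hD⟩ with hDv
  have hadjD : (KB H).Adj (iso v) Dv := by
    refine ⟨fun h => hDC ?_, hCD⟩
    · rw [h]
  set d : V := iso.symm Dv with hd
  have hvd : G.Adj v d := by
    rw [← iso.map_adj_iff, RelIso.apply_symm_apply]
    exact hadjD
  have hda : d ≠ a := by
    intro h
    apply hDA
    have : Dv = iso a := by rw [← h, hd, RelIso.apply_symm_apply]
    exact congrArg Subtype.val this
  have hdb : d ≠ b := by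
    intro h
    apply hDB
    have : Dv = iso b := by rw [← h, hd, RelIso.apply_symm_apply]
    exact congrArg Subtype.val this
  have hsub : ({a, b, d} : Finset V) ⊆ G.neighborFinset v := by
    intro x hx
    simp only [Finset.mem_insert, Finset.mem_singleton] at hx
    rw [SimpleGraph.mem_neighborFinset]
    rcases hx with rfl | rfl | rfl
    · exact hva
    · exact hvb
    · exact hvd
  have hcard : ({a, b, d} : Finset V).card = 3 := by
    rw [Finset.card_insert_of_notMem (by simp [hab, hda.symm]),
      Finset.card_insert_of_notMem (by simp [hdb.symm]), Finset.card_singleton]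
  have := Finset.card_le_card hsub
  rw [hcard] at this
  rw [SimpleGraph.degree] at hdeg
  omega
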